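/- The output of Ranked Pairs satisfies (γ, f/n)-minimal-batch-order-fairness for every γ with 1/2 < γ ≤ 1 simultaneously: if at least γn of the true observed orderings rank τ before τ' but the output ranks τ' before τ, then there is a sequence of transactions τ' = τ_1, ..., τ_k = τ such that at least (γ − 2f/n)·n of the true observed orderings rank τ_i before τ_{i+1} and the output ranks τ_i before τ_{i+1}, for every 1 ≤ i ≤ k−1. -/

import Mathlib

/-!
Ranked Pairs rejects the edge `(τ, τ')` only because the edges accepted before it already
contain a path from `τ'` to `τ`; that path stays in the output. Every edge on it was processed
before `(τ, τ')`, so its reported weight is at least that of `(τ, τ')`. Moving between reported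
and true weights costs at most `f/n` each way, hence each edge on the path has true weight at
least `γ - 2f/n`.
-/

/-- The fraction of the `n` voters (each voter `i` ranking transactions by the
injective rank function `rank i`) that rank `a` before `b`. -/
def voteWeight {V : Type*} (n : ℕ) (rank : Fin n → V → ℕ) (a b : V) : ℚ :=
  ((Finset.univ.filter (fun i : Fin n => rank i a < rank i b)).card : ℚ) / n

/-- A set `H` of directed edges has a directed cycle. -/
def hasCycle {V : Type*} (H : Set (V × V)) : Prop :=
  ∃ v : V, Relation.TransGen (fun a b : V => (a, b) ∈ H) v v

/-- The greedy (Ranked Pairs) edge-selection process: iterate over the list of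
edges, adding each edge to the accumulated set `H` unless doing so would create a
directed cycle in `H`. -/
noncomputable def greedy {V : Type*} : List (V × V) → Set (V × V) → Set (V × V)
  | [], H => H
  | e :: rest, H =>
      greedy rest
        (@ite _ (hasCycle (insert e H)) (Classical.propDecidable _) H (insert e H))

open Finset Relation

section Greedy

variable {V : Type*}

theorem not_hasCycle_empty : ¬ hasCycle (∅ : Set (V × V)) := by
  rintro ⟨v, hv⟩
  rcases (transGen_iff _ _ _).mp hv with h | ⟨_, _, h⟩ <;> exact h

theorem transGen_insert_cases {H : Set (V × V)} {a b x y : V}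
    (h : TransGen (fun p q : V => (p, q) ∈ insert (a, b) H) x y) :
    TransGen (fun p q : V => (p, q) ∈ H) x y ∨
      (ReflTransGen (fun p q : V => (p, q) ∈ H) x a ∧
        ReflTransGen (fun p q : V => (p, q) ∈ H) b y) := by
  induction h with
  | single h =>
    rcases Set.mem_insert_iff.mp h with h | h
    · obtain ⟨rfl, rfl⟩ := Prod.mk.inj h
      exact Or.inr ⟨.refl, .refl⟩
    · exact Or.inl (.single h)
  | tail _ hR ih =>
    rcases Set.mem_insert_iff.mp hR with h | h
    · obtain ⟨rfl, rfl⟩ := Prod.mk.inj h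
      rcases ih with ih | ih
      · exact Or.inr ⟨ih.to_reflTransGen, .refl⟩
      · exact Or.inr ⟨ih.1, .refl⟩
    · rcases ih with ih | ih
      · exact Or.inl (ih.tail h)
      · exact Or.inr ⟨ih.1, ih.2.tail h⟩

theorem transGen_of_hasCycle_insert {H : Set (V × V)} {a b : V}
    (hH : ¬ hasCycle H) (hab : a ≠ b) (h : hasCycle (insert (a, b) H)) :
    TransGen (fun p q : V => (p, q) ∈ H) b a := by
  obtain ⟨v, hv⟩ := h
  rcases transGen_insert_cases hv with hcyc | ⟨hva, hbv⟩
  · exact absurd ⟨v, hcyc⟩ hH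
  · rcases (hbv.trans hva).cases_head with rfl | ⟨c, hbc, hca⟩
    · exact absurd rfl hab
    · exact .head' hbc hca

theorem subset_greedy : ∀ (L : List (V × V)) (H : Set (V × V)), H ⊆ greedy L H
  | [], _ => subset_rfl
  | e :: rest, H => by
    rw [greedy]
    split
    · exact subset_greedy rest H
    · exact (Set.subset_insert e H).trans (subset_greedy rest _)

theorem mem_or_mem_of_mem_greedy :
    ∀ {L : List (V × V)} {H : Set (V × V)} {e : V × V}, e ∈ greedy L H → e ∈ H ∨ e ∈ L
  | [], _, _, he => Or.inl he
  | d :: rest, H, e, he => by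
    rw [greedy] at he
    split at he
    · exact (mem_or_mem_of_mem_greedy he).imp_right (List.mem_cons_of_mem _)
    · rcases mem_or_mem_of_mem_greedy he with (rfl | hH) | hrest
      · exact Or.inr List.mem_cons_self
      · exact Or.inl hH
      · exact Or.inr (List.mem_cons_of_mem _ hrest)

theorem not_hasCycle_greedy :
    ∀ (L : List (V × V)) {H : Set (V × V)}, ¬ hasCycle H → ¬ hasCycle (greedy L H)
  | [], _, hH => hH
  | e :: rest, H, hH => by
    rw [greedy]
    split
    · exact not_hasCycle_greedy rest hH
    · exact not_hasCycle_greedy rest ‹_›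

theorem greedy_append :
    ∀ (L₁ L₂ : List (V × V)) (H : Set (V × V)), greedy (L₁ ++ L₂) H = greedy L₂ (greedy L₁ H)
  | [], _, _ => rfl
  | e :: rest, L₂, H => by
    rw [List.cons_append, greedy, greedy, greedy_append rest L₂ _]

theorem greedy_subset_greedy_append (L₁ L₂ : List (V × V)) (H : Set (V × V)) :
    greedy L₁ H ⊆ greedy (L₁ ++ L₂) H := by
  rw [greedy_append]
  exact subset_greedy L₂ _

theorem transGen_greedy_of_not_mem_greedy {L₁ L₂ : List (V × V)} {H : Set (V × V)} {a b : V}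
    (hH : ¬ hasCycle H) (hab : a ≠ b) (hrej : (a, b) ∉ greedy (L₁ ++ (a, b) :: L₂) H) :
    TransGen (fun p q : V => (p, q) ∈ greedy L₁ H) b a := by
  rw [greedy_append, greedy] at hrej
  split at hrej
  · exact transGen_of_hasCycle_insert (not_hasCycle_greedy L₁ hH) hab ‹_›
  · exact absurd (subset_greedy L₂ _ (Set.mem_insert _ _)) hrej

end Greedy

theorem card_filter_le_card_filter_add_card_compl {ι : Type*} [Fintype ι] [DecidableEq ι]
    {p q : ι → Prop} [DecidablePred p] [DecidablePred q] (s : Finset ι)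
    (hpq : ∀ i ∈ s, p i → q i) :
    #(univ.filter p) ≤ #(univ.filter q) + #sᶜ := by
  refine (card_le_card fun i hi => ?_).trans (card_union_le _ _)
  by_cases hs : i ∈ s
  · exact mem_union_left _ (mem_filter.2 ⟨mem_univ i, hpq i hs (mem_filter.1 hi).2⟩)
  · exact mem_union_right _ (mem_compl.2 hs)

theorem voteWeight_le_voteWeight_add {V : Type*} {n f : ℕ} (r₁ r₂ : Fin n → V → ℕ)
    (honest : Finset (Fin n)) (hcard : n - f ≤ #honest) (hagree : ∀ i ∈ honest, r₁ i = r₂ i)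
    (a b : V) :
    voteWeight n r₁ a b ≤ voteWeight n r₂ a b + (f : ℚ) / n := by
  have hfaulty : #honestᶜ ≤ f := by
    rw [card_compl, Fintype.card_fin]
    omega
  have hcount := card_filter_le_card_filter_add_card_compl (p := fun i => r₁ i a < r₁ i b)
    (q := fun i => r₂ i a < r₂ i b) honest fun i hi h => hagree i hi ▸ h
  rw [voteWeight, voteWeight, ← add_div]
  exact div_le_div_of_nonneg_right (by exact_mod_cast hcount.trans (by omega)) n.cast_nonneg

theorem rankedPairs_minimal_batch_order_fair_general {V : Type*}
    {n f : ℕ}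
    (trueRank repRank : Fin n → V → ℕ)
    (honest : Finset (Fin n)) (hhcard : n - f ≤ honest.card)
    (hhon : ∀ i ∈ honest, repRank i = trueRank i)
    (L : List (V × V))
    (hmemL : ∀ a b : V, a ≠ b → (a, b) ∈ L)
    (hsort : L.Pairwise (fun e f' =>
      voteWeight n repRank f'.1 f'.2 ≤ voteWeight n repRank e.1 e.2)) :
    ∀ γ : ℚ, 1 / 2 < γ → γ ≤ 1 →
      ∀ τ τ' : V, τ ≠ τ' →
        γ ≤ voteWeight n trueRank τ τ' →
        (τ', τ) ∈ greedy L ∅ →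
        ∃ l : List V, l.head? = some τ' ∧ l.getLast? = some τ ∧
          l.Chain' (fun a b : V =>
            γ - 2 * ((f : ℚ) / n) ≤ voteWeight n trueRank a b ∧
            (a, b) ∈ greedy L ∅) := by
  intro γ _ _ τ τ' hne hγ hout
  obtain ⟨L₁, L₂, rfl⟩ := List.append_of_mem (hmemL τ τ' hne)
  have hrej : (τ, τ') ∉ greedy (L₁ ++ (τ, τ') :: L₂) ∅ := fun hin =>
    not_hasCycle_greedy _ not_hasCycle_empty ⟨τ, .tail (.single hin) hout⟩
  have hpath := transGen_greedy_of_not_mem_greedy not_hasCycle_empty hne hrej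
  have hweight : ∀ e ∈ greedy L₁ ∅, γ - 2 * ((f : ℚ) / n) ≤ voteWeight n trueRank e.1 e.2 := by
    intro e he
    have heL₁ : e ∈ L₁ := (mem_or_mem_of_mem_greedy he).resolve_left (Set.notMem_empty e)
    have hearlier : voteWeight n repRank τ τ' ≤ voteWeight n repRank e.1 e.2 :=
      (List.pairwise_append.1 hsort).2.2 e heL₁ (τ, τ') List.mem_cons_self
    linarith [voteWeight_le_voteWeight_add trueRank repRank honest hhcard
        (fun i hi => (hhon i hi).symm) τ τ',
      voteWeight_le_voteWeight_add repRank trueRank honest hhcard hhon e.1 e.2]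
  obtain ⟨l, hl, hchain, hhead, hlast⟩ :=
    List.exists_isChain_ne_nil_of_relationReflTransGen hpath.to_reflTransGen
  refine ⟨l, hhead ▸ List.head?_eq_some_head hl, hlast ▸ List.getLast?_eq_some_getLast hl, ?_⟩
  exact hchain.imp fun a b hab => ⟨hweight (a, b) hab, greedy_subset_greedy_append _ _ _ hab⟩

/-- Ranked Pairs, run on the reported orders of `n` replicas of which all but at
most `f` are honest (report their true observed order), satisfies
`(γ, f/n)`-minimal-batch-order-fairness simultaneously for every `1/2 < γ ≤ 1`:
if at least a `γ` fraction of the true observed orderings rank `τ` before `τ'` but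
the output ranks `τ'` before `τ`, then there is a sequence `τ' = τ_1, ..., τ_k = τ`
such that at least a `γ − 2f/n` fraction of the true observed orderings rank
`τ_i` before `τ_{i+1}` and the output ranks `τ_i` before `τ_{i+1}` for every `i`. -/
theorem rankedPairs_minimal_batch_order_fair {V : Type*} [Fintype V]
    {n f : ℕ} (hn : 0 < n)
    (trueRank repRank : Fin n → V → ℕ)
    (htrue : ∀ i, Function.Injective (trueRank i))
    (hrep : ∀ i, Function.Injective (repRank i))
    (honest : Finset (Fin n)) (hhcard : n - f ≤ honest.card)
    (hhon : ∀ i ∈ honest, repRank i = trueRank i)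
    (L : List (V × V))
    (hmemL : ∀ a b : V, a ≠ b → (a, b) ∈ L)
    (hnd : L.Nodup)
    (hirr : ∀ e ∈ L, e.1 ≠ e.2)
    (hsort : L.Pairwise (fun e f' =>
      voteWeight n repRank f'.1 f'.2 ≤ voteWeight n repRank e.1 e.2)) :
    ∀ γ : ℚ, 1 / 2 < γ → γ ≤ 1 →
      ∀ τ τ' : V, τ ≠ τ' →
        γ ≤ voteWeight n trueRank τ τ' →
        (τ', τ) ∈ greedy L ∅ →
        ∃ l : List V, l.head? = some τ' ∧ l.getLast? = some τ ∧
          l.Chain' (fun a b : V =>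
            γ - 2 * ((f : ℚ) / n) ≤ voteWeight n trueRank a b ∧
            (a, b) ∈ greedy L ∅) :=
  rankedPairs_minimal_batch_order_fair_general trueRank repRank honest hhcard hhon L hmemL hsort
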